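/- Hölder inequality for upper Burkill integrals: for p, q > 1 with 1/p + 1/q = 1 and nonnegative interval functions g₁, g₂, the upper Burkill integral of g₁·g₂ over R is at most (upper ∫_R g₁^p)^{1/p} · (upper ∫_R g₂^q)^{1/q}, assuming the right-hand side quantities are finite. -/

import Mathlib

open Filter Finset

/-- A division of the interval `[a, b]` into finitely many non-overlapping
subintervals, given by division points `P 0 = a < P 1 < ⋯ < P n = b`. -/
structure Division (a b : ℝ) where
  n : ℕ
  P : ℕ → ℝ
  npos : 0 < n
  mono : ∀ i < n, P i < P (i + 1)
  first : P 0 = a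
  last : P n = b

/-- The Riemann sum of the interval function `g` over the division `D`. -/
def Division.sum {a b : ℝ} (D : Division a b) (g : ℝ → ℝ → ℝ) : ℝ :=
  ∑ i ∈ Finset.range D.n, g (D.P i) (D.P (i + 1))

/-- `D.normLt e` means that the norm (mesh) of the division `D` is `< e`. -/
def Division.normLt {a b : ℝ} (D : Division a b) (e : ℝ) : Prop :=
  ∀ i < D.n, D.P (i + 1) - D.P i < e

/-- A Riemann succession: a sequence of divisions whose norms tend to `0`. -/
def IsRiemannSuccession {a b : ℝ} (D : ℕ → Division a b) : Prop :=
  ∀ e > 0, ∃ N, ∀ n ≥ N, (D n).normLt e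

/-- The upper Burkill integral of `g` over `[a, b]` (with respect to the family
of all Riemann successions): the supremum over all Riemann successions of the
limsup of the Riemann sums. -/
noncomputable def upperBurkill (g : ℝ → ℝ → ℝ) (a b : ℝ) : EReal :=
  sSup {L : EReal | ∃ D : ℕ → Division a b, IsRiemannSuccession D ∧
    L = Filter.limsup (fun n => (((D n).sum g : ℝ) : EReal)) Filter.atTop}

/-- The lower Burkill integral of `g` over `[a, b]`: the infimum over all
Riemann successions of the liminf of the Riemann sums. -/
noncomputable def lowerBurkill (g : ℝ → ℝ → ℝ) (a b : ℝ) : EReal :=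
  sInf {L : EReal | ∃ D : ℕ → Division a b, IsRiemannSuccession D ∧
    L = Filter.liminf (fun n => (((D n).sum g : ℝ) : EReal)) Filter.atTop}

/-! On every division the discrete Hölder inequality bounds the Riemann sum of `g₁ g₂` by
`S₁ ^ (1/p) * S₂ ^ (1/q)`, where `S₁, S₂` are the Riemann sums of `g₁ ^ p, g₂ ^ q`. Along a Riemann
succession eventually `S₁ ≤ B + ε` and `S₂ ≤ C + ε`, and `ε → 0` gives the bound. -/

namespace Division

variable {a b : ℝ} (D : Division a b)

lemma strictMonoOn : StrictMonoOn D.P (Set.Iic D.n) :=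
  strictMonoOn_Iic_of_lt_succ D.mono

lemma mem_Icc {i : ℕ} (hi : i ≤ D.n) : D.P i ∈ Set.Icc a b :=
  ⟨D.first.symm.trans_le (D.strictMonoOn.monotoneOn (Nat.zero_le _) hi (Nat.zero_le i)),
    (D.strictMonoOn.monotoneOn hi Set.self_mem_Iic hi).trans_eq D.last⟩

variable {g g₁ g₂ : ℝ → ℝ → ℝ}

lemma apply_nonneg (hg : ∀ x y : ℝ, a ≤ x → x < y → y ≤ b → 0 ≤ g x y) {i : ℕ}
    (hi : i < D.n) : 0 ≤ g (D.P i) (D.P (i + 1)) :=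
  hg _ _ (D.mem_Icc hi.le).1 (D.mono i hi) (D.mem_Icc hi).2

lemma sum_nonneg (hg : ∀ x y : ℝ, a ≤ x → x < y → y ≤ b → 0 ≤ g x y) : 0 ≤ D.sum g :=
  Finset.sum_nonneg fun _ hi => D.apply_nonneg hg (mem_range.mp hi)

lemma sum_mul_le_Lp_mul_Lq {p q : ℝ} (hpq : p.HolderConjugate q)
    (h₁ : ∀ x y : ℝ, a ≤ x → x < y → y ≤ b → 0 ≤ g₁ x y)
    (h₂ : ∀ x y : ℝ, a ≤ x → x < y → y ≤ b → 0 ≤ g₂ x y) :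
    D.sum (fun x y => g₁ x y * g₂ x y) ≤
      D.sum (fun x y => g₁ x y ^ p) ^ (1 / p) * D.sum (fun x y => g₂ x y ^ q) ^ (1 / q) :=
  Real.inner_le_Lp_mul_Lq_of_nonneg _ hpq (fun _ hi => D.apply_nonneg h₁ (mem_range.mp hi))
    (fun _ hi => D.apply_nonneg h₂ (mem_range.mp hi))

end Division

lemma limsup_sum_le_upperBurkill {g : ℝ → ℝ → ℝ} {a b : ℝ} {D : ℕ → Division a b}
    (hD : IsRiemannSuccession D) :
    limsup (fun n => (((D n).sum g : ℝ) : EReal)) atTop ≤ upperBurkill g a b :=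
  le_sSup ⟨D, hD, rfl⟩

lemma EReal.limsup_le_rpow_mul_rpow {ι : Type*} {l : Filter ι} {u v w : ι → ℝ}
    {α β B C : ℝ} (hα : 0 < α) (hβ : 0 < β) (hv : ∀ i, 0 ≤ v i) (hw : ∀ i, 0 ≤ w i)
    (huvw : ∀ i, u i ≤ v i ^ α * w i ^ β)
    (hB : limsup (fun i => (v i : EReal)) l ≤ B) (hC : limsup (fun i => (w i : EReal)) l ≤ C) :
    limsup (fun i => (u i : EReal)) l ≤ ((B ^ α * C ^ β : ℝ) : EReal) := by
  have eventually_le_add {s : ι → ℝ} {S : ℝ} (hS : limsup (fun i => (s i : EReal)) l ≤ S)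
      {ε : ℝ} (hε : 0 < ε) : ∀ᶠ i in l, s i ≤ S + ε :=
    (eventually_lt_of_limsup_lt (hS.trans_lt (by exact_mod_cast lt_add_of_pos_right S hε))).mono
      fun _ h => (EReal.coe_lt_coe_iff.mp h).le
  have bound : ∀ ε > 0, limsup (fun i => (u i : EReal)) l ≤
      (((B + ε) ^ α * (C + ε) ^ β : ℝ) : EReal) := by
    intro ε hε
    refine limsup_le_of_le (by isBoundedDefault) ?_
    filter_upwards [eventually_le_add hB hε, eventually_le_add hC hε] with i hvi hwi
    exact_mod_cast (huvw i).trans <| mul_le_mul (Real.rpow_le_rpow (hv i) hvi hα.le)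
      (Real.rpow_le_rpow (hw i) hwi hβ.le) (Real.rpow_nonneg (hw i) _)
      (Real.rpow_nonneg ((hv i).trans hvi) _)
  have hcont : Continuous fun ε : ℝ => (((B + ε) ^ α * (C + ε) ^ β : ℝ) : EReal) :=
    continuous_coe_real_ereal.comp <|
      ((Real.continuous_rpow_const hα.le).comp (continuous_const_add B)).mul
        ((Real.continuous_rpow_const hβ.le).comp (continuous_const_add C))
  exact ge_of_tendsto
    (tendsto_nhdsWithin_of_tendsto_nhds (s := Set.Ioi 0) (hcont.tendsto' 0 _ (by simp)))
    (eventually_mem_nhdsWithin.mono bound)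

theorem upperBurkill_holder_general (g₁ g₂ : ℝ → ℝ → ℝ) (a b p q : ℝ)
    (hp : 1 < p) (hpq : 1 / p + 1 / q = 1)
    (h₁ : ∀ x y : ℝ, a ≤ x → x < y → y ≤ b → 0 ≤ g₁ x y)
    (h₂ : ∀ x y : ℝ, a ≤ x → x < y → y ≤ b → 0 ≤ g₂ x y)
    (B C : ℝ)
    (hB : upperBurkill (fun x y => g₁ x y ^ p) a b = (B : EReal))
    (hC : upperBurkill (fun x y => g₂ x y ^ q) a b = (C : EReal)) :
    upperBurkill (fun x y => g₁ x y * g₂ x y) a b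
      ≤ ((B ^ (1 / p) * C ^ (1 / q) : ℝ) : EReal) := by
  have hpq' : p.HolderConjugate q :=
    Real.holderConjugate_iff.mpr ⟨hp, by simpa only [one_div] using hpq⟩
  refine sSup_le ?_
  rintro _ ⟨D, hD, rfl⟩
  exact EReal.limsup_le_rpow_mul_rpow hpq'.one_div_pos hpq'.symm.one_div_pos
    (fun n => (D n).sum_nonneg fun x y hx hxy hy => Real.rpow_nonneg (h₁ x y hx hxy hy) p)
    (fun n => (D n).sum_nonneg fun x y hx hxy hy => Real.rpow_nonneg (h₂ x y hx hxy hy) q)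
    (fun n => (D n).sum_mul_le_Lp_mul_Lq hpq' h₁ h₂)
    (hB ▸ limsup_sum_le_upperBurkill hD) (hC ▸ limsup_sum_le_upperBurkill hD)

/-- (2.19a): Hölder inequality for upper Burkill integrals: for `p, q > 1` with
`1/p + 1/q = 1` and nonnegative interval functions `g₁, g₂`,
`upper ∫ g₁·g₂ ≤ (upper ∫ g₁^p)^{1/p} · (upper ∫ g₂^q)^{1/q}`, assuming the
right-hand side quantities are finite. -/
theorem upperBurkill_holder (g₁ g₂ : ℝ → ℝ → ℝ) (a b p q : ℝ) (hab : a < b)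
    (hp : 1 < p) (hq : 1 < q) (hpq : 1 / p + 1 / q = 1)
    (h₁ : ∀ x y : ℝ, a ≤ x → x < y → y ≤ b → 0 ≤ g₁ x y)
    (h₂ : ∀ x y : ℝ, a ≤ x → x < y → y ≤ b → 0 ≤ g₂ x y)
    (B C : ℝ)
    (hB : upperBurkill (fun x y => g₁ x y ^ p) a b = (B : EReal))
    (hC : upperBurkill (fun x y => g₂ x y ^ q) a b = (C : EReal)) :
    upperBurkill (fun x y => g₁ x y * g₂ x y) a b
      ≤ ((B ^ (1 / p) * C ^ (1 / q) : ℝ) : EReal) :=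
  upperBurkill_holder_general g₁ g₂ a b p q hp hpq h₁ h₂ B C hB hC
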